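/- arXiv:2211.13100 — 2 statements merged into one kernel-verified Lean document; each statement's English description precedes it below -/
import Mathlib

section
/- Suppose Assumptions 1 and 3 hold; define π(R) = ∫₀^∞ max{0, mz − R} dΦ(z), ψ_f(R) = βπ(R)/(1 − βR) for R ∈ [1, 1/β), and ψ_b(R) = (β/(1−β))·π(R)/R for R ∈ [1, ∞). Then ψ_f is continuous and strictly increasing with ψ_f(1) = 1/λ̄ and ψ_f(R) → ∞ as R ↑ 1/β (so its range is [1/λ̄, ∞)), and ψ_b is continuous and strictly decreasing with ψ_b(1) = 1/λ̄ and ψ_b(R) → 0 as R → ∞ (so its range is (0, 1/λ̄]). (Lemma on the equilibrium-rate maps ψ_f and ψ_b.) -/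
open Filter Topology MeasureTheory

/-- **Assumption 1.** `Φ` (the law `μ` of productivity) is an absolutely continuous
cdf on `[0,∞)` with `Φ(z) < 1` for all `z` and a finite mean. -/
structure Assumption1 (μ : Measure ℝ) : Prop where
  prob : IsProbabilityMeasure μ
  supp : μ (Set.Iio 0) = 0
  absCont : μ ≪ MeasureTheory.volume
  lt_one : ∀ z : ℝ, μ (Set.Iic z) < 1
  finite_mean : Integrable id μ

/-- The cdf `Φ` of the productivity distribution `μ`. -/
noncomputable def Phi (μ : Measure ℝ) (z : ℝ) : ℝ := (μ (Set.Iic z)).toReal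

/-- The risk premium `π(R) = ∫ max{0, mz − R} dΦ(z)` on unlevered capital investment. -/
noncomputable def premium (μ : Measure ℝ) (m R : ℝ) : ℝ := ∫ z, max 0 (m * z - R) ∂μ

/-- The leverage threshold `λ̄ = ((1−β)/β)·(∫ max{mz−1, 0} dΦ(z))⁻¹`. -/
noncomputable def lamBar (β m : ℝ) (μ : Measure ℝ) : ℝ :=
  ((1 - β) / β) * (∫ z, max (m * z - 1) 0 ∂μ)⁻¹

/-- **Trend stationary equilibrium** of the two-sector large open economy with linear
technology `F(K,X) = mK + DX`: gross risk-free rate `R > 1`, growth rate `G > 0`,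
threshold `z̄ = R/m` with `Φ(z̄) > 1 − 1/λ`, and sequences of aggregate wealth,
capital, land price, and external savings satisfying the equilibrium conditions,
with `B_t/W_t → 0`. -/
structure TSE (μ : Measure ℝ) (β lam m D : ℝ)
    (R G : ℝ) (W K P B : ℕ → ℝ) : Prop where
  hR : 1 < R
  hG : 0 < G
  hthr : 1 - 1 / lam < Phi μ (R / m)
  hW : ∀ t, 0 < W t
  hP : ∀ t, 0 < P t
  price : ∀ t, R = (P (t + 1) + D) / P t
  growth : G = β * (R + lam * premium μ m R)
  Wdyn : ∀ t, W (t + 1) = G * W t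
  Kdyn : ∀ t, K (t + 1) = β * lam * W t * ∫ z in Set.Ioi (R / m), z ∂μ
  bond : ∀ t, P t + B t = β * (lam * Phi μ (R / m) + 1 - lam) * W t
  wealth : ∀ t, W (t + 1) = m * K (t + 1) + R * (P t + B t)
  hBW : Filter.Tendsto (fun t => B t / W t) Filter.atTop (nhds 0)

/-- `ψ_f(R) = βπ(R)/(1 − βR)`, defined for `R ∈ [1, 1/β)`. -/
noncomputable def psiF (μ : Measure ℝ) (β m R : ℝ) : ℝ :=
  β * premium μ m R / (1 - β * R)

/-- `ψ_b(R) = (β/(1−β))·π(R)/R`, defined for `R ∈ [1, ∞)`. -/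
noncomputable def psiB (μ : Measure ℝ) (β m R : ℝ) : ℝ :=
  β / (1 - β) * (premium μ m R / R)

/-! With `q(R) = μ(z > R/m)`, which is positive for every `R`, the premium satisfies
`(R' - R) q(R') ≤ π(R) - π(R') ≤ (R' - R) q(R)` for `R ≤ R'`, so `π` is positive, strictly
decreasing and Lipschitz; this settles `ψ_b`. For `ψ_f` the same upper bound reduces strict
monotonicity to `(1 - βR) q(R) < βπ(R)`, and the difference of the two sides is
`∫_{z > R/m} (βmz - 1) dμ`: Assumption 3 says it is positive at `R = 1`, and it stays positive
for `R ≥ 1` because the integrand is increasing in `z`. The ranges follow from the intermediate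
value theorem. -/

open Set

section Images

variable {α δ : Type*} [ConditionallyCompleteLinearOrder α] [TopologicalSpace α] [OrderTopology α]
  [DenselyOrdered α] [LinearOrder δ] [TopologicalSpace δ] [OrderClosedTopology δ] {f : α → δ}

theorem MonotoneOn.image_Ico_eq_Ici {a b : α} (hab : a < b) (hf : MonotoneOn f (Ico a b))
    (hfc : ContinuousOn f (Ico a b)) (hlim : Tendsto f (𝓝[Ico a b] b) atTop) :
    f '' Ico a b = Ici (f a) := by
  refine (image_subset_iff.2 fun x hx => hf (left_mem_Ico.2 hab) hx hx.1).antisymm fun y hy => ?_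
  have : (𝓝[Ico a b] b).NeBot := by
    rw [← mem_closure_iff_nhdsWithin_neBot, closure_Ico hab.ne]
    exact right_mem_Icc.2 hab.le
  obtain ⟨x, hyx, hx⟩ :=
    ((hlim.eventually (eventually_ge_atTop y)).and eventually_mem_nhdsWithin).exists
  have hsub : Icc a x ⊆ Ico a b := Icc_subset_Ico_right hx.2
  exact image_mono hsub (intermediate_value_Icc hx.1 (hfc.mono hsub) ⟨hy, hyx⟩)

theorem AntitoneOn.image_Ici_eq_Ioc [OrderTopology δ] {a : α} {c : δ} (hf : AntitoneOn f (Ici a))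
    (hfc : ContinuousOn f (Ici a)) (hlim : Tendsto f atTop (𝓝 c)) (hgt : ∀ x ∈ Ici a, c < f x) :
    f '' Ici a = Ioc c (f a) := by
  refine Subset.antisymm ?_ ?_
  · rintro _ ⟨x, hx, rfl⟩
    exact ⟨hgt x hx, hf self_mem_Ici hx hx⟩
  rintro y ⟨hcy, hya⟩
  obtain ⟨x, hxy, hx⟩ := ((hlim.eventually (eventually_lt_nhds hcy)).and
    (eventually_ge_atTop a)).exists
  have hsub : Icc a x ⊆ Ici a := Icc_subset_Ici_self
  exact image_mono hsub (intermediate_value_Icc' hx (hfc.mono hsub) ⟨hxy.le, hya⟩)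

end Images

theorem setIntegral_Ioi_pos_of_monotone {μ : Measure ℝ} [IsFiniteMeasure μ] {f : ℝ → ℝ}
    (hf : Monotone f) (hfi : Integrable f μ) {a₀ a : ℝ} (ha : a₀ ≤ a)
    (h₀ : 0 < ∫ z in Ioi a₀, f z ∂μ) (hμa : 0 < μ.real (Ioi a)) :
    0 < ∫ z in Ioi a, f z ∂μ := by
  rcases le_or_gt (f a) 0 with hfa | hfa
  · have hsplit : ∫ z in Ioi a₀, f z ∂μ = (∫ z in Ioc a₀ a, f z ∂μ) + ∫ z in Ioi a, f z ∂μ := by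
      rw [← setIntegral_union (Ioc_disjoint_Ioi le_rfl) measurableSet_Ioi hfi.integrableOn
        hfi.integrableOn, Ioc_union_Ioi_eq_Ioi ha]
    have hneg : ∫ z in Ioc a₀ a, f z ∂μ ≤ 0 :=
      setIntegral_nonpos measurableSet_Ioc fun z hz => (hf hz.2).trans hfa
    linarith
  · calc 0 < μ.real (Ioi a) * f a := mul_pos hμa hfa
      _ = ∫ _ in Ioi a, f a ∂μ := by rw [setIntegral_const, smul_eq_mul]
      _ ≤ ∫ z in Ioi a, f z ∂μ := setIntegral_mono_on (integrableOn_const (measure_ne_top _ _))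
          hfi.integrableOn measurableSet_Ioi fun z hz => hf hz.le

theorem measureReal_Ioi_eq_one_sub_Phi {μ : Measure ℝ} [IsProbabilityMeasure μ] (a : ℝ) :
    μ.real (Ioi a) = 1 - Phi μ a := by
  rw [← compl_Iic, measureReal_compl measurableSet_Iic, probReal_univ, Phi, measureReal_def]

theorem Assumption1.measureReal_Ioi_pos {μ : Measure ℝ} (hμ : Assumption1 μ) (a : ℝ) :
    0 < μ.real (Ioi a) := by
  have := hμ.prob
  have hlt : Phi μ a < 1 := by
    rw [Phi, ← ENNReal.toReal_one]
    exact ENNReal.toReal_strict_mono ENNReal.one_ne_top (hμ.lt_one a)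
  rw [measureReal_Ioi_eq_one_sub_Phi]
  linarith

theorem premium_nonneg (μ : Measure ℝ) (m R : ℝ) : 0 ≤ premium μ m R :=
  integral_nonneg fun _ => le_max_left _ _

section Premium

variable {μ : Measure ℝ} [IsFiniteMeasure μ] {m : ℝ}

theorem integrable_max_zero_mul_sub (hμ : Integrable id μ) (m R : ℝ) :
    Integrable (fun z => max 0 (m * z - R)) μ :=
  ((hμ.const_mul m).sub (integrable_const R)).pos_part.congr
    (ae_of_all _ fun _ => max_comm _ _)

theorem integral_max_add_indicator (hμ : Integrable id μ) (m R a c : ℝ) :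
    ∫ z, (max 0 (m * z - R) + (Ioi a).indicator (fun _ => c) z) ∂μ
      = premium μ m R + c * μ.real (Ioi a) := by
  rw [integral_add (integrable_max_zero_mul_sub hμ m R)
    ((integrable_const c).indicator measurableSet_Ioi), integral_indicator measurableSet_Ioi,
    setIntegral_const, smul_eq_mul, mul_comm, premium]

theorem premium_le_add (hμ : Integrable id μ) (hm : 0 < m) {R R' : ℝ} (h : R ≤ R') :
    premium μ m R ≤ premium μ m R' + (R' - R) * μ.real (Ioi (R / m)) := by
  rw [← integral_max_add_indicator hμ]
  refine integral_mono (integrable_max_zero_mul_sub hμ m R)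
    ((integrable_max_zero_mul_sub hμ m R').add
      ((integrable_const _).indicator measurableSet_Ioi)) fun z => ?_
  by_cases hz : z ∈ Ioi (R / m)
  · rw [indicator_of_mem hz]
    exact max_le (by positivity) (by linarith [le_max_right 0 (m * z - R')])
  · rw [indicator_of_notMem hz, add_zero]
    rw [mem_Ioi, not_lt, le_div_iff₀' hm] at hz
    exact (max_eq_left (by linarith)).trans_le (le_max_left _ _)

theorem add_le_premium (hμ : Integrable id μ) (hm : 0 < m) {R R' : ℝ} (h : R ≤ R') :
    premium μ m R' + (R' - R) * μ.real (Ioi (R' / m)) ≤ premium μ m R := by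
  rw [← integral_max_add_indicator hμ]
  refine integral_mono ((integrable_max_zero_mul_sub hμ m R').add
    ((integrable_const _).indicator measurableSet_Ioi)) (integrable_max_zero_mul_sub hμ m R)
    fun z => ?_
  by_cases hz : z ∈ Ioi (R' / m)
  · rw [indicator_of_mem hz]
    rw [mem_Ioi, div_lt_iff₀' hm] at hz
    rw [max_eq_right (by linarith), max_eq_right (by linarith)]
    linarith
  · rw [indicator_of_notMem hz, add_zero]
    exact max_le_max le_rfl (by linarith)

theorem premium_antitone (hμ : Integrable id μ) (m : ℝ) : Antitone (premium μ m) :=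
  fun _ _ h => integral_mono (integrable_max_zero_mul_sub hμ m _)
    (integrable_max_zero_mul_sub hμ m _) fun _ => max_le_max le_rfl (by linarith)

theorem continuous_premium (hμ : Integrable id μ) (hm : 0 < m) : Continuous (premium μ m) := by
  refine (LipschitzWith.of_le_add_mul' (μ.real univ) fun R R' => ?_).continuous
  rcases le_total R R' with h | h
  · have hq : μ.real (Ioi (R / m)) ≤ μ.real univ := measureReal_mono (subset_univ _)
    calc premium μ m R ≤ premium μ m R' + (R' - R) * μ.real (Ioi (R / m)) :=
          premium_le_add hμ hm h
      _ ≤ premium μ m R' + μ.real univ * dist R R' := by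
          rw [Real.dist_eq, abs_sub_comm, abs_of_nonneg (sub_nonneg.2 h)]
          nlinarith
  · nlinarith [premium_antitone hμ m h, dist_nonneg (x := R) (y := R'),
      measureReal_nonneg (μ := μ) (s := univ)]

theorem premium_strictAnti (hμ : Integrable id μ) (htail : ∀ a, 0 < μ.real (Ioi a))
    (hm : 0 < m) : StrictAnti (premium μ m) :=
  fun R R' h => by nlinarith [add_le_premium hμ hm h.le, htail (R' / m)]

theorem premium_pos (hμ : Integrable id μ) (htail : ∀ a, 0 < μ.real (Ioi a)) (hm : 0 < m)
    (R : ℝ) : 0 < premium μ m R :=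
  (premium_nonneg μ m (R + 1)).trans_lt (premium_strictAnti hμ htail hm (lt_add_one R))

end Premium

theorem premium_eq_setIntegral {μ : Measure ℝ} {m : ℝ} (hm : 0 < m) (R : ℝ) :
    premium μ m R = ∫ z in Ioi (R / m), (m * z - R) ∂μ := by
  rw [premium, ← integral_indicator measurableSet_Ioi]
  congr 1 with z
  by_cases hz : z ∈ Ioi (R / m)
  · rw [indicator_of_mem hz, max_eq_right]
    rw [mem_Ioi, div_lt_iff₀' hm] at hz
    linarith
  · rw [indicator_of_notMem hz, max_eq_left]
    rw [mem_Ioi, not_lt, le_div_iff₀' hm] at hz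
    linarith

section Threshold

variable {μ : Measure ℝ} [IsProbabilityMeasure μ] {β m : ℝ}

theorem mul_premium_sub_eq_setIntegral (hμ : Integrable id μ) (hm : 0 < m) (R : ℝ) :
    β * premium μ m R - (1 - β * R) * μ.real (Ioi (R / m))
      = ∫ z in Ioi (R / m), (β * m * z - 1) ∂μ := by
  have hint : IntegrableOn (fun z => β * (m * z - R)) (Ioi (R / m)) μ :=
    (((hμ.const_mul m).sub (integrable_const R)).const_mul β).integrableOn
  rw [premium_eq_setIntegral hm, ← integral_const_mul, mul_comm (1 - β * R), ← smul_eq_mul,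
    ← setIntegral_const, ← integral_sub hint (integrableOn_const (measure_ne_top _ _))]
  congr 1 with z
  ring

theorem setIntegral_Ioi_one_div_pos (hμ : Integrable id μ)
    (hA3 : 1 - Phi μ (1 / m) < β * m * ∫ z in Ioi (1 / m), z ∂μ) :
    0 < ∫ z in Ioi (1 / m), (β * m * z - 1) ∂μ := by
  have hint : IntegrableOn (fun z => β * m * z) (Ioi (1 / m)) μ := (hμ.const_mul _).integrableOn
  rw [integral_sub hint (integrableOn_const (measure_ne_top _ _)),
    integral_const_mul, setIntegral_const, smul_eq_mul, mul_one, measureReal_Ioi_eq_one_sub_Phi]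
  exact sub_pos.2 hA3

theorem one_sub_mul_measureReal_lt_mul_premium (hμ : Integrable id μ)
    (htail : ∀ a, 0 < μ.real (Ioi a)) (hβ : 0 < β) (hm : 0 < m)
    (hA3 : 1 - Phi μ (1 / m) < β * m * ∫ z in Ioi (1 / m), z ∂μ) {R : ℝ} (hR : 1 ≤ R) :
    (1 - β * R) * μ.real (Ioi (R / m)) < β * premium μ m R := by
  have hmono : Monotone fun z : ℝ => β * m * z - 1 := fun x y hxy => by
    have := mul_le_mul_of_nonneg_left hxy (mul_pos hβ hm).le
    linarith
  have := setIntegral_Ioi_pos_of_monotone hmono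
    ((hμ.const_mul (β * m)).sub (integrable_const 1)) (div_le_div_of_nonneg_right hR hm.le)
    (setIntegral_Ioi_one_div_pos hμ hA3) (htail (R / m))
  rw [← mul_premium_sub_eq_setIntegral hμ hm] at this
  linarith

end Threshold

theorem inv_lamBar (β m : ℝ) (μ : Measure ℝ) :
    (lamBar β m μ)⁻¹ = β / (1 - β) * premium μ m 1 := by
  simp only [lamBar, premium, max_comm (0 : ℝ), mul_inv, inv_inv, inv_div]

theorem psiF_one (μ : Measure ℝ) (β m : ℝ) : psiF μ β m 1 = (lamBar β m μ)⁻¹ := by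
  rw [psiF, inv_lamBar, mul_one]
  ring

theorem psiB_one (μ : Measure ℝ) (β m : ℝ) : psiB μ β m 1 = (lamBar β m μ)⁻¹ := by
  rw [psiB, inv_lamBar, div_one]

section PsiF

variable {μ : Measure ℝ} {β m : ℝ}

theorem one_sub_mul_pos_of_mem_Ico (hβ : 0 < β) {R : ℝ} (hR : R ∈ Ico 1 (1 / β)) :
    0 < 1 - β * R := by
  have := (lt_div_iff₀' hβ).1 hR.2
  linarith

theorem continuousOn_psiF (hμ : Assumption1 μ) (hβ : 0 < β) (hm : 0 < m) :
    ContinuousOn (psiF μ β m) (Ico 1 (1 / β)) := by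
  have := hμ.prob
  have hπ := continuous_premium hμ.finite_mean hm
  exact (continuous_const.mul hπ).continuousOn.div (by fun_prop)
    fun R hR => (one_sub_mul_pos_of_mem_Ico hβ hR).ne'

theorem strictMonoOn_psiF (hμ : Assumption1 μ) (hβ : 0 < β) (hm : 0 < m)
    (hA3 : 1 - Phi μ (1 / m) < β * m * ∫ z in Ioi (1 / m), z ∂μ) :
    StrictMonoOn (psiF μ β m) (Ico 1 (1 / β)) := by
  have := hμ.prob
  intro R hR R' hR' hlt
  rw [psiF, psiF, div_lt_div_iff₀ (one_sub_mul_pos_of_mem_Ico hβ hR)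
    (one_sub_mul_pos_of_mem_Ico hβ hR')]
  have hsub := premium_le_add hμ.finite_mean hm hlt.le
  have hkey := one_sub_mul_measureReal_lt_mul_premium hμ.finite_mean hμ.measureReal_Ioi_pos hβ
    hm hA3 hR.1
  set q := μ.real (Ioi (R / m))
  have hq' : (1 - β * R') * q < β * premium μ m R' := by
    linarith [mul_le_mul_of_nonneg_left hsub hβ.le]
  have hd' := one_sub_mul_pos_of_mem_Ico hβ hR'
  have hgap : 0 < β * (R' - R) := mul_pos hβ (sub_pos.2 hlt)
  linarith [mul_le_mul_of_nonneg_left hsub (mul_pos hβ hd').le, mul_lt_mul_of_pos_left hq' hgap]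

theorem tendsto_psiF (hμ : Assumption1 μ) (hβ : 0 < β) (hm : 0 < m) :
    Tendsto (psiF μ β m) (𝓝[Ico 1 (1 / β)] (1 / β)) atTop := by
  have := hμ.prob
  have hπ := continuous_premium hμ.finite_mean hm
  have hnum : Tendsto (fun R => β * premium μ m R) (𝓝[Ico 1 (1 / β)] (1 / β))
      (𝓝 (β * premium μ m (1 / β))) :=
    ((continuous_const.mul hπ).tendsto _).mono_left nhdsWithin_le_nhds
  have hden : Tendsto (fun R => 1 - β * R) (𝓝[Ico 1 (1 / β)] (1 / β)) (𝓝[>] 0) := by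
    refine tendsto_nhdsWithin_iff.2 ⟨?_, eventually_nhdsWithin_of_forall
      fun R hR => one_sub_mul_pos_of_mem_Ico hβ hR⟩
    have h : Tendsto (fun R : ℝ => 1 - β * R) (𝓝 (1 / β)) (𝓝 (1 - β * (1 / β))) :=
      (by fun_prop : Continuous fun R : ℝ => 1 - β * R).tendsto _
    rw [mul_one_div_cancel hβ.ne', sub_self] at h
    exact h.mono_left nhdsWithin_le_nhds
  exact (hnum.pos_mul_atTop (mul_pos hβ (premium_pos hμ.finite_mean hμ.measureReal_Ioi_pos hm _))
    (tendsto_inv_nhdsGT_zero.comp hden)).congr fun R => (div_eq_mul_inv _ _).symm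

end PsiF

section PsiB

variable {μ : Measure ℝ} {β m : ℝ}

theorem continuousOn_psiB (hμ : Assumption1 μ) (hm : 0 < m) :
    ContinuousOn (psiB μ β m) (Ici 1) := by
  have := hμ.prob
  have hπ := continuous_premium hμ.finite_mean hm
  exact continuousOn_const.mul (hπ.continuousOn.div continuousOn_id
    fun R hR => (zero_lt_one.trans_le hR).ne')

theorem psiB_pos (hμ : Assumption1 μ) (hβ : β ∈ Ioo 0 1) (hm : 0 < m) {R : ℝ} (hR : 0 < R) :
    0 < psiB μ β m R := by
  have := hμ.prob
  exact mul_pos (div_pos hβ.1 (sub_pos.2 hβ.2))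
    (div_pos (premium_pos hμ.finite_mean hμ.measureReal_Ioi_pos hm R) hR)

theorem strictAntiOn_psiB (hμ : Assumption1 μ) (hβ : β ∈ Ioo 0 1) (hm : 0 < m) :
    StrictAntiOn (psiB μ β m) (Ici 1) := by
  have := hμ.prob
  intro R hR R' hR' hlt
  have hR0 : 0 < R := zero_lt_one.trans_le hR
  exact mul_lt_mul_of_pos_left (div_lt_div₀
    (premium_strictAnti hμ.finite_mean hμ.measureReal_Ioi_pos hm hlt) hlt.le
    (premium_nonneg μ m R) hR0) (div_pos hβ.1 (sub_pos.2 hβ.2))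

theorem tendsto_psiB_atTop (hμ : Assumption1 μ) : Tendsto (psiB μ β m) atTop (𝓝 0) := by
  have := hμ.prob
  have hπ : Tendsto (fun R => premium μ m R / R) atTop (𝓝 0) := by
    refine squeeze_zero' ?_ ?_ ((tendsto_const_nhds (x := premium μ m 1)).div_atTop tendsto_id)
    · filter_upwards [eventually_ge_atTop 0] with R hR
      exact div_nonneg (premium_nonneg μ m R) hR
    · filter_upwards [eventually_ge_atTop 1] with R hR
      exact div_le_div_of_nonneg_right (premium_antitone hμ.finite_mean m hR)
        (zero_le_one.trans hR)
  rw [← mul_zero (β / (1 - β))]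
  exact hπ.const_mul (β / (1 - β))

end PsiB

/-- **Lemma on the equilibrium-rate maps.** Under Assumptions 1 and 3, `ψ_f` is
continuous and strictly increasing on `[1, 1/β)` with `ψ_f(1) = 1/λ̄` and
`ψ_f(R) → ∞` as `R ↑ 1/β` (range `[1/λ̄, ∞)`), while `ψ_b` is continuous and strictly
decreasing on `[1, ∞)` with `ψ_b(1) = 1/λ̄` and `ψ_b(R) → 0` as `R → ∞`
(range `(0, 1/λ̄]`). -/
theorem psi_lemma
    (μ : Measure ℝ) (hμ : Assumption1 μ)
    (β m : ℝ) (hβ : β ∈ Set.Ioo (0 : ℝ) 1) (hm : 0 < m)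
    (hA3 : 1 - Phi μ (1 / m) < β * m * ∫ z in Set.Ioi (1 / m), z ∂μ) :
    ContinuousOn (psiF μ β m) (Set.Ico 1 (1 / β)) ∧
    StrictMonoOn (psiF μ β m) (Set.Ico 1 (1 / β)) ∧
    psiF μ β m 1 = (lamBar β m μ)⁻¹ ∧
    Tendsto (psiF μ β m) (nhdsWithin (1 / β) (Set.Ico 1 (1 / β))) atTop ∧
    psiF μ β m '' Set.Ico 1 (1 / β) = Set.Ici (lamBar β m μ)⁻¹ ∧
    ContinuousOn (psiB μ β m) (Set.Ici 1) ∧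
    StrictAntiOn (psiB μ β m) (Set.Ici 1) ∧
    psiB μ β m 1 = (lamBar β m μ)⁻¹ ∧
    Tendsto (psiB μ β m) atTop (𝓝 0) ∧
    psiB μ β m '' Set.Ici 1 = Set.Ioc 0 (lamBar β m μ)⁻¹ := by
  have hF_cont := continuousOn_psiF hμ hβ.1 hm
  have hF_mono := strictMonoOn_psiF hμ hβ.1 hm hA3
  have hF_lim := tendsto_psiF hμ hβ.1 hm
  have hB_cont := continuousOn_psiB (β := β) hμ hm
  have hB_anti := strictAntiOn_psiB hμ hβ hm
  have hB_lim := tendsto_psiB_atTop (β := β) (m := m) hμ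
  refine ⟨hF_cont, hF_mono, psiF_one μ β m, hF_lim, ?_, hB_cont, hB_anti, psiB_one μ β m,
    hB_lim, ?_⟩
  · rw [← psiF_one μ β m]
    exact hF_mono.monotoneOn.image_Ico_eq_Ici (one_lt_one_div hβ.1 hβ.2) hF_cont hF_lim
  · rw [← psiB_one μ β m]
    exact hB_anti.antitoneOn.image_Ici_eq_Ioc hB_cont hB_lim
      fun R hR => psiB_pos hμ hβ hm (zero_lt_one.trans_le hR)
end

section
/- Suppose Assumptions 1 and 5 hold, let m > 0 and R > 1, set π(R) = ∫₀^∞ max{0, mz − R} dΦ(z) (which is strictly positive under Assumption 1), and define g(z) = max{0, mz − R}/π(R) − 1. Let υ ∈ (0,1) (the survival probability) and c ∈ (0,1), and define ρ(ζ) = υ·∫₀^∞ (1 + c·g(z))^ζ dΦ(z) for ζ ≥ 0. Then ρ(ζ) is finite for every ζ ≥ 0, ρ(1) = υ < 1, ρ(ζ) → ∞ as ζ → ∞, and there exists a unique ζ* ∈ (1, ∞) with ρ(ζ*) = 1. (Proposition 6, core claim: the Pareto exponent equation has a unique solution exceeding 1; in the model c = 1 − βR in the fundamental regime G = 1 and c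 = 1 − β in the bubbly regime G > 1, and ζ* is the Pareto exponent of the stationary wealth distribution.) -/
open Filter Topology MeasureTheory

/-!
Write `X = 1 + c·g = (1 - c) + (c/π(R))·max{0, mz - R}`. Then `X ≥ 1 - c > 0` and `E X = 1`;
as an affine function of the positive part of `mz - R`, `X` lies in every `Lᵖ` by thin tails,
so every `X^ζ` is integrable. Pointwise convexity of `ζ ↦ x^ζ` makes `ζ ↦ E[X^ζ]` convex, and
since `Φ < 1` everywhere, `X ≥ 1 + c` with positive probability, so
`E[X^ζ] ≥ (1 + c)^ζ·P(X ≥ 1 + c)` tends to infinity. As `ρ(1) = υ < 1`, the intermediate value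
theorem gives a root beyond `1`, and a convex function that is below `1` at `ζ = 1` and equals
`1` at a root `ζ*` is strictly above `1` to the right of `ζ*`, so the root is unique.
-/

open Set

theorem ConvexOn.existsUnique_gt_eq_of_tendsto_atTop {f : ℝ → ℝ} {a x₀ y : ℝ}
    (hf : ConvexOn ℝ (Ioi a) f) (hax₀ : a < x₀) (hfx₀ : f x₀ < y)
    (hf_top : Tendsto f atTop atTop) :
    ∃! x, x₀ < x ∧ f x = y := by
  have hx₀ : x₀ ∈ Ioi a := hax₀
  have lt_of_root : ∀ u v, x₀ < u → u < v → f u = y → y < f v := fun u v hu huv hfu =>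
    hfu ▸ hf.lt_right_of_left_lt hx₀ (hax₀.trans (hu.trans huv))
      (by rw [openSegment_eq_Ioo (hu.trans huv)]; exact ⟨hu, huv⟩) (hfu ▸ hfx₀)
  obtain ⟨x₁, hfx₁, hx₀x₁⟩ :=
    ((hf_top.eventually_ge_atTop y).and (eventually_ge_atTop x₀)).exists
  obtain ⟨x, hx, hfx⟩ := intermediate_value_Icc hx₀x₁
    ((hf.continuousOn isOpen_Ioi).mono fun t ht => hax₀.trans_le ht.1) ⟨hfx₀.le, hfx₁⟩
  have hx₀x : x₀ < x := hx.1.lt_of_ne (by rintro rfl; exact hfx₀.ne hfx)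
  refine ⟨x, ⟨hx₀x, hfx⟩, fun x' ⟨hx₀x', hfx'⟩ => ?_⟩
  rcases lt_trichotomy x' x with h | h | h
  · exact absurd hfx (lt_of_root x' x hx₀x' h hfx').ne'
  · exact h
  · exact absurd hfx' (lt_of_root x x' hx₀x h hfx).ne'

section Moments

variable {α : Type*} [MeasurableSpace α] {μ : Measure α} {X : α → ℝ}

theorem memLp_of_forall_integrable_pow [IsFiniteMeasure μ]
    (hX : ∀ j : ℕ, 1 ≤ j → Integrable (fun x => X x ^ j) μ) {p : ENNReal} (hp : p ≠ ⊤) :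
    MemLp X p μ := by
  obtain ⟨n, hpn⟩ := ENNReal.exists_nat_gt hp
  have hn : 1 ≤ n := Nat.one_le_iff_ne_zero.2 (by rintro rfl; simp at hpn)
  have hXm : AEStronglyMeasurable X μ := by simpa using (hX 1 le_rfl).aestronglyMeasurable
  have hXn : MemLp X n μ := by
    refine (integrable_norm_rpow_iff hXm (by simp; omega) (by simp)).1 ?_
    simpa [norm_pow] using (hX n hn).norm
  exact hXn.mono_exponent hpn.le

theorem convexOn_integral_rpow {s : Set ℝ} (hs : Convex ℝ s) (hX : ∀ x, 0 < X x)
    (hint : ∀ ζ ∈ s, Integrable (fun x => X x ^ ζ) μ) :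
    ConvexOn ℝ s fun ζ => ∫ x, X x ^ ζ ∂μ := by
  refine ⟨hs, fun ζ hζ ξ hξ a b ha hb hab => ?_⟩
  calc ∫ x, X x ^ (a • ζ + b • ξ) ∂μ ≤ ∫ x, (a • X x ^ ζ + b • X x ^ ξ) ∂μ :=
        integral_mono (hint _ (hs hζ hξ ha hb hab))
          (((hint ζ hζ).const_mul a).add ((hint ξ hξ).const_mul b))
          fun x => (convexOn_rpow_left (hX x)).2 trivial trivial ha hb hab
    _ = a • ∫ x, X x ^ ζ ∂μ + b • ∫ x, X x ^ ξ ∂μ := by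
        simp only [smul_eq_mul]
        rw [integral_add ((hint ζ hζ).const_mul a) ((hint ξ hξ).const_mul b), integral_const_mul,
          integral_const_mul]

theorem tendsto_integral_rpow_atTop [IsFiniteMeasure μ] (hX : ∀ x, 0 ≤ X x)
    (hint : ∀ ζ : ℝ, 0 ≤ ζ → Integrable (fun x => X x ^ ζ) μ) {b : ℝ} (hb : 1 < b)
    (hμb : 0 < μ {x | b ≤ X x}) :
    Tendsto (fun ζ : ℝ => ∫ x, X x ^ ζ ∂μ) atTop atTop := by
  have hμb' : 0 < μ.real {x | b ≤ X x} := ENNReal.toReal_pos hμb.ne' (measure_ne_top _ _)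
  refine tendsto_atTop_mono' atTop ?_
    ((tendsto_rpow_atTop_of_base_gt_one b hb).atTop_mul_const hμb')
  filter_upwards [eventually_ge_atTop 0] with ζ hζ
  calc b ^ ζ * μ.real {x | b ≤ X x} ≤ b ^ ζ * μ.real {x | b ^ ζ ≤ X x ^ ζ} := by
        refine mul_le_mul_of_nonneg_left (measureReal_mono fun x (hx : b ≤ X x) => ?_)
          (by positivity)
        exact Real.rpow_le_rpow (by linarith) hx hζ
    _ ≤ ∫ x, X x ^ ζ ∂μ := mul_meas_ge_le_integral_of_nonneg
        (Eventually.of_forall fun x => Real.rpow_nonneg (hX x) ζ) (hint ζ hζ) _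

end Moments

theorem MeasureTheory.MemLp.max_zero_mul_sub {μ : Measure ℝ} [IsFiniteMeasure μ] {p : ENNReal}
    (hid : MemLp id p μ) (m R : ℝ) : MemLp (fun z => max 0 (m * z - R)) p μ := by
  refine ((hid.const_mul m).sub (memLp_const R)).pos_part.congr_norm
    (by fun_prop) (ae_of_all _ fun z => ?_)
  simp [max_comm]

-- `1 + c·g(z)` with `g` unfolded
noncomputable def growthFactor (μ : Measure ℝ) (m R c z : ℝ) : ℝ :=
  (1 - c) + c / premium μ m R * max 0 (m * z - R)

namespace Assumption1

variable {μ : Measure ℝ}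

theorem measure_Ioi_pos (hμ : Assumption1 μ) (x : ℝ) : 0 < μ (Ioi x) := by
  have := hμ.prob
  rw [← compl_Iic, prob_compl_eq_one_sub measurableSet_Iic]
  exact tsub_pos_of_lt (hμ.lt_one x)

theorem measure_le_payoff_pos (hμ : Assumption1 μ) {m : ℝ} (hm : 0 < m) (R t : ℝ) :
    0 < μ {z | t ≤ max 0 (m * z - R)} := by
  refine (hμ.measure_Ioi_pos ((t + R) / m)).trans_le (measure_mono fun z hz => ?_)
  have : t + R < z * m := (div_lt_iff₀ hm).1 hz
  show t ≤ max 0 (m * z - R)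
  exact le_max_of_le_right (by linarith [mul_comm z m])

theorem integrable_payoff (hμ : Assumption1 μ) (m R : ℝ) :
    Integrable (fun z => max 0 (m * z - R)) μ := by
  have := hμ.prob
  exact ((hμ.finite_mean.const_mul m).sub (integrable_const R)).pos_part.congr
    (ae_of_all _ fun z => max_comm _ _)

theorem premium_pos (hμ : Assumption1 μ) {m : ℝ} (hm : 0 < m) (R : ℝ) :
    0 < premium μ m R := by
  refine (integral_pos_iff_support_of_nonneg (fun z => le_max_left _ _)
    (hμ.integrable_payoff m R)).2 ((hμ.measure_le_payoff_pos hm R 1).trans_le (measure_mono ?_))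
  exact fun z hz => (zero_lt_one.trans_le hz).ne'

variable {m R c : ℝ}

theorem growthFactor_pos (hμ : Assumption1 μ) (hm : 0 < m) (hc₀ : 0 ≤ c) (hc₁ : c < 1) (z : ℝ) :
    0 < growthFactor μ m R c z := by
  have := hμ.premium_pos hm R
  have := le_max_left 0 (m * z - R)
  have : 0 < 1 - c := sub_pos.2 hc₁
  unfold growthFactor
  positivity

theorem integrable_growthFactor_rpow (hμ : Assumption1 μ)
    (hthin : ∀ j : ℕ, 1 ≤ j → Integrable (fun z : ℝ => z ^ j) μ) (hm : 0 < m) (hc₀ : 0 ≤ c)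
    (hc₁ : c < 1) {ζ : ℝ} (hζ : 0 ≤ ζ) :
    Integrable (fun z => growthFactor μ m R c z ^ ζ) μ := by
  have := hμ.prob
  have hid : MemLp id (ENNReal.ofReal ζ) μ :=
    memLp_of_forall_integrable_pow (X := id) hthin ENNReal.ofReal_ne_top
  have hX : MemLp (growthFactor μ m R c) (ENNReal.ofReal ζ) μ :=
    (memLp_const (1 - c)).add ((hid.max_zero_mul_sub m R).const_mul (c / premium μ m R))
  simpa [hζ, Real.norm_of_nonneg (hμ.growthFactor_pos hm hc₀ hc₁ _).le] using
    hX.integrable_norm_rpow'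

theorem integral_growthFactor (hμ : Assumption1 μ) (hm : 0 < m) :
    ∫ z, growthFactor μ m R c z ∂μ = 1 := by
  have := hμ.prob
  have := (hμ.premium_pos hm R).ne'
  simp only [growthFactor]
  rw [integral_add (integrable_const _) ((hμ.integrable_payoff m R).const_mul _),
    integral_const_mul, integral_const, ← premium]
  field_simp
  simp

theorem measure_le_growthFactor_pos (hμ : Assumption1 μ) (hm : 0 < m) (hc₀ : 0 < c) :
    0 < μ {z | 1 + c ≤ growthFactor μ m R c z} := by
  have hP := hμ.premium_pos hm R
  refine (hμ.measure_le_payoff_pos hm R (2 * premium μ m R)).trans_le (measure_mono fun z hz => ?_)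
  have : 2 * c ≤ c / premium μ m R * max 0 (m * z - R) := by
    rw [div_mul_eq_mul_div, le_div_iff₀ hP]
    nlinarith [show 2 * premium μ m R ≤ max 0 (m * z - R) from hz]
  show 1 + c ≤ (1 - c) + c / premium μ m R * max 0 (m * z - R)
  linarith

end Assumption1

theorem pareto_exponent_unique_general
    (μ : Measure ℝ) (hμ : Assumption1 μ)
    (hthin : ∀ j : ℕ, 1 ≤ j → Integrable (fun z : ℝ => z ^ j) μ)
    (m R : ℝ) (hm : 0 < m)
    (υ c : ℝ) (hυ : υ ∈ Set.Ioo (0 : ℝ) 1) (hc : c ∈ Set.Ioo (0 : ℝ) 1)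
    (g : ℝ → ℝ) (hg : ∀ z : ℝ, g z = max 0 (m * z - R) / premium μ m R - 1)
    (ρfun : ℝ → ℝ) (hρ : ∀ ζ : ℝ, ρfun ζ = υ * ∫ z, (1 + c * g z) ^ ζ ∂μ) :
    0 < premium μ m R ∧
    (∀ ζ : ℝ, 0 ≤ ζ → Integrable (fun z : ℝ => (1 + c * g z) ^ ζ) μ) ∧
    ρfun 1 = υ ∧
    Tendsto ρfun atTop atTop ∧
    ∃! ζ : ℝ, 1 < ζ ∧ ρfun ζ = 1 := by
  obtain ⟨hυ₀, hυ₁⟩ := hυ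
  obtain ⟨hc₀, hc₁⟩ := hc
  have := hμ.prob
  have hX : ∀ z, 1 + c * g z = growthFactor μ m R c z := fun z => by
    rw [hg, growthFactor]; ring
  have hX_pos := hμ.growthFactor_pos (R := R) hm hc₀.le hc₁
  have hint : ∀ ζ : ℝ, 0 ≤ ζ → Integrable (fun z => growthFactor μ m R c z ^ ζ) μ :=
    fun ζ hζ => hμ.integrable_growthFactor_rpow hthin hm hc₀.le hc₁ hζ
  have hρ_eq : ρfun = fun ζ => υ * ∫ z, growthFactor μ m R c z ^ ζ ∂μ :=
    funext fun ζ => by simp only [hρ, hX]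
  have hρ1 : ρfun 1 = υ := by simp [hρ_eq, hμ.integral_growthFactor hm]
  have htend : Tendsto ρfun atTop atTop := hρ_eq ▸
    (tendsto_integral_rpow_atTop (fun z => (hX_pos z).le) hint (lt_add_of_pos_right 1 hc₀)
      (hμ.measure_le_growthFactor_pos hm hc₀)).const_mul_atTop hυ₀
  have hconv : ConvexOn ℝ (Ioi 0) ρfun := hρ_eq ▸
    (convexOn_integral_rpow (convex_Ioi 0) hX_pos fun ζ hζ => hint ζ hζ.le).smul hυ₀.le
  exact ⟨hμ.premium_pos hm R, by simpa only [hX] using hint, hρ1, htend,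
    hconv.existsUnique_gt_eq_of_tendsto_atTop one_pos (hρ1.trans_lt hυ₁) htend⟩

/-- **Proposition 6, core claim (Pareto exponent).** Under Assumptions 1 and 5
(thin tails), with `m > 0`, `R > 1`, `π(R) = ∫ max{0, mz − R} dΦ(z)` (strictly
positive), `g(z) = max{0, mz − R}/π(R) − 1`, survival probability `υ ∈ (0,1)` and
`c ∈ (0,1)`: `ρ(ζ) = υ·∫ (1 + c·g(z))^ζ dΦ(z)` is finite for every `ζ ≥ 0`,
`ρ(1) = υ < 1`, `ρ(ζ) → ∞` as `ζ → ∞`, and there is a unique `ζ* ∈ (1, ∞)` with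
`ρ(ζ*) = 1`. -/
theorem pareto_exponent_unique
    (μ : Measure ℝ) (hμ : Assumption1 μ)
    (hthin : ∀ j : ℕ, 1 ≤ j → Integrable (fun z : ℝ => z ^ j) μ)
    (m R : ℝ) (hm : 0 < m) (hR : 1 < R)
    (υ c : ℝ) (hυ : υ ∈ Set.Ioo (0 : ℝ) 1) (hc : c ∈ Set.Ioo (0 : ℝ) 1)
    (g : ℝ → ℝ) (hg : ∀ z : ℝ, g z = max 0 (m * z - R) / premium μ m R - 1)
    (ρfun : ℝ → ℝ) (hρ : ∀ ζ : ℝ, ρfun ζ = υ * ∫ z, (1 + c * g z) ^ ζ ∂μ) :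
    0 < premium μ m R ∧
    (∀ ζ : ℝ, 0 ≤ ζ → Integrable (fun z : ℝ => (1 + c * g z) ^ ζ) μ) ∧
    ρfun 1 = υ ∧
    Tendsto ρfun atTop atTop ∧
    ∃! ζ : ℝ, 1 < ζ ∧ ρfun ζ = 1 :=
  pareto_exponent_unique_general μ hμ hthin m R hm υ c hυ hc g hg ρfun hρ
end
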